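/- For every V_0-selector g: α_1^g = {σ}, and for every non-critical index i ∈ [2,ℓ], α_i^g = α_{i−1}^g ∩ Ψ_i. -/

import Mathlib

universe u v

/-- A leaf of a graph: a node with at most one neighbour. -/
def IsTreeLeaf {𝒱 : Type v} (T : SimpleGraph 𝒱) (x : 𝒱) : Prop :=
  (T.neighborSet x).Subsingleton

/-- `(T, B)` is a tree decomposition of the graph with vertex set `V` and edge
relation `E`. -/
def IsTreeDecomp {V : Type u} {𝒱 : Type v} (E : V → V → Prop) (T : SimpleGraph 𝒱)
    (B : 𝒱 → Finset V) : Prop :=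
  T.IsTree ∧ (∀ s t : V, E s t → ∃ x : 𝒱, s ∈ B x ∧ t ∈ B x) ∧
    ∀ s : V, (T.induce {x : 𝒱 | s ∈ B x}).Connected

/-- A nice (rooted) tree decomposition: every leaf has a singleton bag, every vertex
is the bag of some leaf, and along every tree edge one bag is obtained from the other
by adding exactly one vertex. -/
def IsNiceTD {V : Type u} {𝒱 : Type v} [DecidableEq V] (E : V → V → Prop)
    (T : SimpleGraph 𝒱) (B : 𝒱 → Finset V) (root : 𝒱) : Prop :=
  IsTreeDecomp E T B ∧
  (∀ x : 𝒱, IsTreeLeaf T x → ∃ s : V, B x = {s}) ∧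
  (∀ s : V, ∃ x : 𝒱, IsTreeLeaf T x ∧ B x = {s}) ∧
  ∀ x y : 𝒱, T.Adj x y →
    (∃ s : V, s ∉ B x ∧ B y = insert s (B x)) ∨ (∃ s : V, s ∉ B y ∧ B x = insert s (B y))

/-- A depth-first traversal `vs 1, …, vs ℓ` of the rooted tree `T`: it starts and ends
at the root, consecutive nodes are adjacent, and every oriented edge of `T` occurs
exactly once among consecutive pairs. -/
structure IsDFT {𝒱 : Type v} (T : SimpleGraph 𝒱) (root : 𝒱) (ℓ : ℕ) (vs : ℕ → 𝒱) :
    Prop where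
  one_le : 1 ≤ ℓ
  first : vs 1 = root
  last : vs ℓ = root
  adj : ∀ j : ℕ, 1 ≤ j → j < ℓ → T.Adj (vs j) (vs (j + 1))
  once : ∀ a b : 𝒱, T.Adj a b → ∃! j : ℕ, 1 ≤ j ∧ j < ℓ ∧ vs j = a ∧ vs (j + 1) = b

/-- `x` is an ancestor of `y` (w.r.t. `root`): `x` lies on the path from the root
to `y`.  (In a tree the path between two nodes is unique.) -/
def Anc {𝒱 : Type v} (T : SimpleGraph 𝒱) (root x y : 𝒱) : Prop :=
  ∀ p : T.Walk root y, p.IsPath → x ∈ p.support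

/-- `Θ_i`: the set of ancestors of `vs i`. -/
def Theta {𝒱 : Type v} (T : SimpleGraph 𝒱) (root : 𝒱) (vs : ℕ → 𝒱) (i : ℕ) : Set 𝒱 :=
  {x | Anc T root x (vs i)}

/-- `Θ_{≤ i} = ⋃_{1 ≤ j ≤ i} Θ_j`. -/
def ThetaLe {𝒱 : Type v} (T : SimpleGraph 𝒱) (root : 𝒱) (vs : ℕ → 𝒱) (i : ℕ) : Set 𝒱 :=
  {x | ∃ j : ℕ, 1 ≤ j ∧ j ≤ i ∧ x ∈ Theta T root vs j}

/-- `Ψ_i = ⋃_{x ∈ Θ_i} B x`. -/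
def Psi {V : Type u} {𝒱 : Type v} (T : SimpleGraph 𝒱) (root : 𝒱) (vs : ℕ → 𝒱)
    (B : 𝒱 → Finset V) (i : ℕ) : Set V :=
  {s | ∃ x ∈ Theta T root vs i, s ∈ B x}

/-- `Ψ_{≤ i} = ⋃_{1 ≤ j ≤ i} Ψ_j`. -/
def PsiLe {V : Type u} {𝒱 : Type v} (T : SimpleGraph 𝒱) (root : 𝒱) (vs : ℕ → 𝒱)
    (B : 𝒱 → Finset V) (i : ℕ) : Set V :=
  {s | ∃ j : ℕ, 1 ≤ j ∧ j ≤ i ∧ s ∈ Psi T root vs B j}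

/-- `x = n_i(w)`: `x` is the lowest ancestor of `w` belonging to `Θ_{≤ i}`. -/
def LowestAnc {𝒱 : Type v} (T : SimpleGraph 𝒱) (root : 𝒱) (vs : ℕ → 𝒱) (i : ℕ)
    (w x : 𝒱) : Prop :=
  Anc T root x w ∧ x ∈ ThetaLe T root vs i ∧
    ∀ y : 𝒱, Anc T root y w → y ∈ ThetaLe T root vs i → Anc T root y x

/-- `r = r(s)`: the node of `𝒯^s = {x | s ∈ B x}` closest to the root. -/
def IsBagRoot {V : Type u} {𝒱 : Type v} (T : SimpleGraph 𝒱) (root : 𝒱)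
    (B : 𝒱 → Finset V) (s : V) (r : 𝒱) : Prop :=
  s ∈ B r ∧ ∀ x : 𝒱, s ∈ B x → Anc T root r x

/-- `Ψ_{> i-1}(x) = {s ∈ Ψ_{> i-1} | n_i(s) = x}`, where `n_i(s) = n_i(r(s))`. -/
def PsiGtAt {V : Type u} {𝒱 : Type v} (T : SimpleGraph 𝒱) (root : 𝒱) (vs : ℕ → 𝒱)
    (B : 𝒱 → Finset V) (i : ℕ) (x : 𝒱) : Set V :=
  {s | s ∉ PsiLe T root vs B (i - 1) ∧
    ∃ r : 𝒱, IsBagRoot T root B s r ∧ LowestAnc T root vs i r x}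

/-- Possible values of a selector view: `?`, `⊤`, `⊥`, or an exit pair `(t, m)`. -/
inductive View (V : Type u) : Type u where
  | unk : View V
  | top : View V
  | bot : View V
  | exit : V → ℕ → View V

/-- The trace of the (partial) selector `f` from `s`: `iter f s n` is the `n`-th
vertex of the trace, if the trace is still defined at step `n`. -/
def iter {V : Type u} (f : V → Option V) (s : V) : ℕ → Option V
  | 0 => some s
  | n + 1 => (iter f s n).bind f

/-- `t` occurs infinitely often on the trace of `f` from `s`. -/
def infOcc {V : Type u} (f : V → Option V) (s t : V) : Prop :=
  ∀ N : ℕ, ∃ n : ℕ, N ≤ n ∧ iter f s n = some t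

/-- A parity game together with a tree decomposition and a depth-first traversal:
edge relation `E`, number of colors `C`, coloring `c`, set `V0` of vertices of
player `P₀` (`V1 = V0ᶜ`), tree `T` with bags `B`, depth-first traversal
`vs 1, …, vs len` and distinguished initial vertex `sigma`. -/
structure Setting (V : Type u) (𝒱 : Type v) where
  E : V → V → Prop
  C : ℕ
  c : V → ℕ
  V0 : Set V
  T : SimpleGraph 𝒱
  vs : ℕ → 𝒱
  len : ℕ
  sigma : V
  B : 𝒱 → Finset V

namespace Setting

variable {V : Type u} {𝒱 : Type v} (S : Setting V 𝒱)

/-- The root of the tree is the first node of the depth-first traversal. -/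
def root : 𝒱 := S.vs 1

/-- Standing assumptions: colors lie in `{1, …, C}`, `(T, B)` is a nice tree
decomposition of `(V, E)` rooted at `v₁` with bag `{σ}`, and `vs` is a
depth-first traversal of `T` of length `len`. -/
def Standing [DecidableEq V] : Prop :=
  (∀ s : V, 1 ≤ S.c s ∧ S.c s ≤ S.C) ∧
  IsNiceTD S.E S.T S.B S.root ∧
  IsDFT S.T S.root S.len S.vs ∧
  S.B S.root = {S.sigma}

def theta (i : ℕ) : Set 𝒱 := Theta S.T S.root S.vs i

def psi (i : ℕ) : Set V := Psi S.T S.root S.vs S.B i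

def psiLe (i : ℕ) : Set V := PsiLe S.T S.root S.vs S.B i

def psiGtAt (i : ℕ) (x : 𝒱) : Set V := PsiGtAt S.T S.root S.vs S.B i x

/-- The index `i` is critical: `Ψ_{>i} ⊊ Ψ_{>i-1}`. -/
def Crit (i : ℕ) : Prop := (S.psiLe i)ᶜ ⊂ (S.psiLe (i - 1))ᶜ

/-- `f` is a `W`-selector: a partial map with domain contained in `W` that follows
edges of the game. -/
def Sel (W : Set V) (f : V → Option V) : Prop :=
  ∀ s t : V, f s = some t → s ∈ W ∧ S.E s t

/-- The (maximal) trace of the `V`-selector `f` from `s` is winning for player `P₀`: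
either it is finite and its last vertex belongs to `V1 = V0ᶜ`, or it is infinite and
the maximal color occurring infinitely often along it is even. -/
def TraceWin (f : V → Option V) (s : V) : Prop :=
  (∃ (n : ℕ) (t : V), iter f s n = some t ∧ f t = none ∧ t ∉ S.V0) ∨
  ((∀ n : ℕ, iter f s n ≠ none) ∧
    ∃ m : ℕ, Even m ∧ (∃ t : V, infOcc f s t ∧ S.c t = m) ∧
      ∀ t : V, infOcc f s t → S.c t ≤ m)

/-- The selector view `f_i(x, s)` of the `V`-selector `f`: `S.SelView f i x s w`
means `f_i(x, s) = w`. -/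
def SelView (f : V → Option V) (i : ℕ) (x : 𝒱) (s : V) : View V → Prop := fun w =>
  match w with
  | View.unk =>
      (f s = none ∧ s ∉ S.psiGtAt i x) ∨ (∃ t : V, f s = some t ∧ t ∉ S.psiGtAt i x)
  | View.top =>
      (f s ≠ none ∨ s ∈ S.psiGtAt i x) ∧
      (∀ (n : ℕ) (t : V), 1 ≤ n → iter f s n = some t → t ∈ S.psiGtAt i x) ∧
      S.TraceWin f s
  | View.bot =>
      (f s ≠ none ∨ s ∈ S.psiGtAt i x) ∧
      (∀ (n : ℕ) (t : V), 1 ≤ n → iter f s n = some t → t ∈ S.psiGtAt i x) ∧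
      ¬ S.TraceWin f s
  | View.exit t m =>
      ∃ j : ℕ, 2 ≤ j ∧ iter f s j = some t ∧ t ∉ S.psiGtAt i x ∧
        (∀ (n : ℕ) (u : V), 1 ≤ n → n < j → iter f s n = some u → u ∈ S.psiGtAt i x) ∧
        (∃ (n : ℕ) (u : V), n < j ∧ iter f s n = some u ∧ S.c u = m) ∧
        (∀ (n : ℕ) (u : V), n < j → iter f s n = some u → S.c u ≤ m)

/-- The selector views `f_i(x)` and `g_i(x)` coincide (as functions on the bag of `x`). -/
def ViewEq (f g : V → Option V) (i : ℕ) (x : 𝒱) : Prop :=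
  ∀ s ∈ S.B x, ∀ w : View V, S.SelView f i x s w ↔ S.SelView g i x s w

/-- `f` is a `V`-selector extending the `V₀`-selector `g` (i.e. `g` is the
restriction of `f` to `V0`). -/
def Ext (f g : V → Option V) : Prop :=
  S.Sel Set.univ f ∧ (∀ s ∈ S.V0, g s = f s) ∧ ∀ s ∉ S.V0, g s = none

/-- The selector view `f_i(x)` of a `V`-selector, as a relation on the bag of `x`. -/
def viewOn (f : V → Option V) (i : ℕ) (x : 𝒱) : V → View V → Prop :=
  fun s w => s ∈ S.B x ∧ S.SelView f i x s w

/-- `ω_i^g(x) = { f_i(x) | f is an extension of g }`. -/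
def omega (g : V → Option V) (i : ℕ) (x : 𝒱) : Set (V → View V → Prop) :=
  {R | ∃ f : V → Option V, S.Ext f g ∧ R = S.viewOn f i x}

/-- The accessibility set `α_i^g`: vertices of `Ψ_i` reachable from `σ` along the
trace of some extension of `g`. -/
def alpha (g : V → Option V) (i : ℕ) : Set V :=
  {s | s ∈ S.psi i ∧ ∃ f : V → Option V, S.Ext f g ∧ ∃ k : ℕ, iter f S.sigma k = some s}

/-- The set `B(g)_{x,y} ⊆ {⊥, ⊤}` (with `false` for `⊥` and `true` for `⊤`). -/
def Bsel (g : V → Option V) (x y : V) : Set Bool :=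
  {b | (b = false ∧ (¬ S.E x y ∨ (x ∈ S.V0 ∧ g x = none) ∨
          (∃ z : V, g x = some z ∧ z ≠ y) ∨ (S.E x y ∧ x ∉ S.V0))) ∨
       (b = true ∧ (g x = some y ∨ (S.E x y ∧ x ∉ S.V0)))}

end Setting


/-!
`Θ₁` consists of the root alone, so `Ψ₁ = {σ}`, and `σ` is reached by the empty trace of
any extension of `g` (for instance `g` itself).

A non-critical index `i` has `Ψ_i ⊆ Ψ_{≤ i-1}`. If `v_i` is the parent of `v_{i-1}` then
`Θ_i ⊆ Θ_{i-1}`. Otherwise `v_i` is a child of `v_{i-1}`, and the only tree edge entering the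
subtree of `v_i` is `(v_{i-1}, v_i)`, which the traversal uses exactly once, at step `i - 1`;
so the nodes `v_1, …, v_{i-1}` and their ancestors lie outside that subtree. A vertex `s` of
the bag of `v_i` that already occurs in such a bag therefore has its connected set `𝒯^s`
crossing that edge, whence `s` lies in the bag of `v_{i-1}`. Thus `Ψ_i ⊆ Ψ_{i-1}`, and then
`α_i = α_{i-1} ∩ Ψ_i` because both sides are the reachable vertices of `Ψ_i`.
-/

open SimpleGraph

section RootedTree

variable {𝒱 : Type*} {T : SimpleGraph 𝒱} {root : 𝒱}

lemma anc_iff_mem_support (hT : T.IsTree) {x y : 𝒱} {p : T.Walk root y} (hp : p.IsPath) :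
    Anc T root x y ↔ x ∈ p.support :=
  ⟨fun h => h p hp, fun hx _ hq => (hT.existsUnique_path root y).unique hq hp ▸ hx⟩

lemma anc_refl (y : 𝒱) : Anc T root y y := fun p _ => p.end_mem_support

lemma anc_root (y : 𝒱) : Anc T root root y := fun p _ => p.start_mem_support

lemma anc_root_iff {x : 𝒱} : Anc T root x root ↔ x = root :=
  ⟨fun h => by simpa using h Walk.nil .nil, by rintro rfl; exact anc_root _⟩

lemma anc_trans (hT : T.IsTree) {x y z : 𝒱} (hxy : Anc T root x y) (hyz : Anc T root y z) :
    Anc T root x z := by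
  classical
  obtain ⟨p, hp⟩ := (hT.existsUnique_path root z).exists
  have hy := hyz p hp
  exact (anc_iff_mem_support hT hp).2 <|
    p.support_takeUntil_subset_support hy (hxy _ (hp.takeUntil hy))

lemma anc_child_iff (hT : T.IsTree) {a b x : 𝒱} (hab : T.Adj a b) (hba : ¬ Anc T root b a) :
    Anc T root x b ↔ Anc T root x a ∨ x = b := by
  obtain ⟨p, hp⟩ := (hT.existsUnique_path root a).exists
  have hb : b ∉ p.support := fun h => hba ((anc_iff_mem_support hT hp).2 h)
  rw [anc_iff_mem_support hT (hp.concat hb hab), anc_iff_mem_support hT hp, Walk.support_concat,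
    List.mem_append, List.mem_singleton]

lemma eq_of_adj_of_anc_of_not_anc (hT : T.IsTree) {a b u w : 𝒱} (hab : T.Adj a b)
    (hba : ¬ Anc T root b a) (hwu : T.Adj w u) (hu : Anc T root b u) (hw : ¬ Anc T root b w) :
    w = a ∧ u = b := by
  obtain ⟨p, hp⟩ := (hT.existsUnique_path root w).exists
  have hbp : b ∉ p.support := fun h => hw ((anc_iff_mem_support hT hp).2 h)
  have hup : u ∉ p.support := fun h => hw (anc_trans hT hu ((anc_iff_mem_support hT hp).2 h))
  have hub : u = b := by
    have hb := (anc_iff_mem_support hT (hp.concat hup hwu)).1 hu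
    rw [Walk.support_concat, List.mem_append, List.mem_singleton] at hb
    exact (hb.resolve_left hbp).symm
  subst hub
  obtain ⟨q, hq⟩ := (hT.existsUnique_path root a).exists
  have huq : u ∉ q.support := fun h => hba ((anc_iff_mem_support hT hq).2 h)
  obtain ⟨hwa, -⟩ := Walk.concat_inj <|
    (hT.existsUnique_path root u).unique (hp.concat hup hwu) (hq.concat huq hab)
  exact ⟨hwa, rfl⟩

lemma mem_of_induce_connected_of_anc_of_not_anc (hT : T.IsTree) {a b z u : 𝒱}
    (hab : T.Adj a b) (hba : ¬ Anc T root b a) {A : Set 𝒱} (hA : (T.induce A).Connected)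
    (hz : z ∈ A) (hu : u ∈ A) (hbz : ¬ Anc T root b z) (hbu : Anc T root b u) : a ∈ A := by
  obtain ⟨p⟩ := hA.preconnected ⟨z, hz⟩ ⟨u, hu⟩
  obtain ⟨d, -, hd₁, hd₂⟩ :=
    p.exists_boundary_dart {x | ¬ Anc T root b x.1} hbz (not_not.2 hbu)
  obtain ⟨hda, -⟩ := eq_of_adj_of_anc_of_not_anc hT hab hba d.adj (not_not.1 hd₂) hd₁
  exact hda ▸ d.fst.2

lemma IsDFT.not_anc_of_le {ℓ : ℕ} {vs : ℕ → 𝒱} (hD : IsDFT T root ℓ vs) (hT : T.IsTree)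
    {a b : 𝒱} (hab : T.Adj a b) (hba : ¬ Anc T root b a) {t : ℕ} (htℓ : t < ℓ)
    (ha : vs t = a) (hb : vs (t + 1) = b) {j : ℕ} (hj : 1 ≤ j) (hjt : j ≤ t) :
    ¬ Anc T root b (vs j) := by
  induction j, hj using Nat.le_induction with
  | base =>
    rw [hD.first, anc_root_iff]
    rintro rfl
    exact hba (anc_root a)
  | succ j hj ih =>
    intro hbj
    obtain ⟨hja, hjb⟩ :=
      eq_of_adj_of_anc_of_not_anc hT hab hba (hD.adj j hj (by omega)) hbj (ih (by omega))
    have := (hD.once a b hab).unique ⟨hj, by omega, hja, hjb⟩ ⟨by omega, htℓ, ha, hb⟩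
    omega

end RootedTree

lemma psi_subset_psi_pred {V 𝒱 : Type*} {T : SimpleGraph 𝒱} {root : 𝒱} {vs : ℕ → 𝒱}
    {B : 𝒱 → Finset V} {ℓ : ℕ} (hT : T.IsTree)
    (hconn : ∀ s : V, (T.induce {x : 𝒱 | s ∈ B x}).Connected) (hD : IsDFT T root ℓ vs)
    {i : ℕ} (h2 : 2 ≤ i) (hiℓ : i ≤ ℓ)
    (hsub : Psi T root vs B i ⊆ PsiLe T root vs B (i - 1)) :
    Psi T root vs B i ⊆ Psi T root vs B (i - 1) := by
  rintro s ⟨x, hx, hsx⟩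
  have hi : i - 1 + 1 = i := by omega
  have hab : T.Adj (vs (i - 1)) (vs i) := hi ▸ hD.adj (i - 1) (by omega) (by omega)
  by_cases hba : Anc T root (vs i) (vs (i - 1))
  · exact ⟨x, anc_trans hT hx hba, hsx⟩
  rcases (anc_child_iff hT hab hba).1 hx with hxa | rfl
  · exact ⟨x, hxa, hsx⟩
  obtain ⟨j, hj1, hji, z, hz, hsz⟩ := hsub ⟨vs i, anc_refl _, hsx⟩
  have hbz : ¬ Anc T root (vs i) z := fun h =>
    hD.not_anc_of_le hT hab hba (by omega) rfl (congrArg vs hi) hj1 hji (anc_trans hT h hz)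
  exact ⟨vs (i - 1), anc_refl _,
    mem_of_induce_connected_of_anc_of_not_anc hT hab hba (hconn s) hsz hsx hbz (anc_refl _)⟩

namespace Setting

variable {V 𝒱 : Type*} (S : Setting V 𝒱)

lemma psiLe_mono : Monotone S.psiLe := by
  rintro i i' hii' s ⟨j, hj1, hji, hs⟩
  exact ⟨j, hj1, hji.trans hii', hs⟩

lemma psi_subset_psiLe {i : ℕ} (hi : 1 ≤ i) : S.psi i ⊆ S.psiLe i :=
  fun _ hs => ⟨i, hi, le_rfl, hs⟩

lemma psiLe_subset_of_not_crit {i : ℕ} (hi : ¬ S.Crit i) : S.psiLe i ⊆ S.psiLe (i - 1) := by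
  by_contra hne
  exact hi (compl_lt_compl_iff_lt.2 ((S.psiLe_mono (Nat.sub_le i 1)).ssubset_of_not_subset hne))

lemma psi_one (hbag : S.B S.root = {S.sigma}) : S.psi 1 = {S.sigma} := by
  ext s
  constructor
  · rintro ⟨x, hx, hs⟩
    rw [show x = S.root from anc_root_iff.1 hx, hbag] at hs
    exact Finset.mem_singleton.1 hs
  · rintro rfl
    exact ⟨S.root, anc_refl _, hbag ▸ Finset.mem_singleton_self _⟩

lemma ext_self {g : V → Option V} (hg : S.Sel S.V0 g) : S.Ext g g :=
  ⟨fun s t h => ⟨trivial, (hg s t h).2⟩, fun _ _ => rfl,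
    fun s hs => Option.eq_none_iff_forall_ne_some.2 fun t h => hs (hg s t h).1⟩

lemma alpha_one (hbag : S.B S.root = {S.sigma}) {g : V → Option V} (hg : S.Sel S.V0 g) :
    S.alpha g 1 = {S.sigma} := by
  ext s
  constructor
  · rintro ⟨hs, -⟩
    rwa [S.psi_one hbag] at hs
  · rintro rfl
    exact ⟨(S.psi_one hbag).symm ▸ rfl, g, S.ext_self hg, 0, rfl⟩

lemma alpha_eq_inter_of_psi_subset (g : V → Option V) {i j : ℕ} (h : S.psi i ⊆ S.psi j) :
    S.alpha g i = S.alpha g j ∩ S.psi i := by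
  ext s
  exact ⟨fun ⟨hs, hr⟩ => ⟨⟨h hs, hr⟩, hs⟩, fun ⟨⟨_, hr⟩, hs⟩ => ⟨hs, hr⟩⟩

end Setting

theorem alpha_first_and_noncritical_general {V : Type u} {𝒱 : Type v}
    [DecidableEq V]
    (S : Setting V 𝒱) (hS : S.Standing)
    (g : V → Option V) (hg : S.Sel S.V0 g) :
    S.alpha g 1 = {S.sigma} ∧
    ∀ i : ℕ, 2 ≤ i → i ≤ S.len → ¬ S.Crit i →
      S.alpha g i = S.alpha g (i - 1) ∩ S.psi i := by
  obtain ⟨-, ⟨⟨hT, -, hconn⟩, -⟩, hD, hbag⟩ := hS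
  refine ⟨S.alpha_one hbag hg, fun i h2 hiℓ hcrit => S.alpha_eq_inter_of_psi_subset g ?_⟩
  exact psi_subset_psi_pred hT hconn hD h2 hiℓ
    ((S.psi_subset_psiLe (by omega)).trans (S.psiLe_subset_of_not_crit hcrit))

/-- `α₁^g = {σ}`, and for every non-critical index `i ∈ [2, ℓ]`,
`α_i^g = α_{i-1}^g ∩ Ψ_i`. -/
theorem alpha_first_and_noncritical {V : Type u} {𝒱 : Type v}
    [Fintype V] [DecidableEq V] [Fintype 𝒱]
    (S : Setting V 𝒱) (hS : S.Standing) (hV : 2 ≤ Fintype.card V)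
    (g : V → Option V) (hg : S.Sel S.V0 g) :
    S.alpha g 1 = {S.sigma} ∧
    ∀ i : ℕ, 2 ≤ i → i ≤ S.len → ¬ S.Crit i →
      S.alpha g i = S.alpha g (i - 1) ∩ S.psi i :=
  alpha_first_and_noncritical_general S hS g hg
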